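/- Define H(x) = (1-x)/(1+x) · (M(x/(1+x)^2) - x), where M(z) = (18z - 1 + (1-12z)^{3/2})/(54z^2) - 1. Then the power series expansion of H begins H(x) = x + 3x^2 + 16x^3 + 96x^4 + 624x^5 + O(x^6). -/
import Mathlib

open Asymptotics

/-- The generating function of rooted planar maps by edges. -/
noncomputable def mapGF (z : ℝ) : ℝ :=
  (18 * z - 1 + (1 - 12 * z) ^ ((3 : ℝ) / 2)) / (54 * z ^ 2) - 1

/-- The generating function of rooted planar 2-maps by edges. -/
noncomputable def twoMapGF (x : ℝ) : ℝ :=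
  (1 - x) / (1 + x) * (mapGF (x / (1 + x) ^ 2) - x)

noncomputable section

def qq (x : ℝ) : ℝ := x^2 - 10*x + 1
def SS (x : ℝ) : ℝ := 1 - 5*x - 12*x^2 - 60*x^3 - 372*x^4 - 2580*x^5 - 19164*x^6 - 149100*x^7
def DD (x : ℝ) : ℝ := -2398920 - 7797600*x - 38806416*x^2 - 209816640*x^3 - 1136614896*x^4
    - 5714704800*x^5 - 22230810000*x^6
def GG (x : ℝ) : ℝ := 1431876 - 189060*x - 1471836*x^2 + 149100*x^3
def ss (x : ℝ) : ℝ := Real.sqrt (qq x)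
def FF (x : ℝ) : ℝ := (GG x + (1-x)*(1+x)*qq x*(DD x/(ss x + SS x)))/(54*(1+x))

lemma alg (x e : ℝ) (hx : x ≠ 0) (h1 : (1:ℝ) + x ≠ 0) :
    (1-x)/(1+x) * ((18*(x/(1+x)^2) - 1 + qq x * (SS x + x^8*e)/(1+x)^3)/(54*(x/(1+x)^2)^2) - 1 - x)
      - (x + 3*x^2 + 16*x^3 + 96*x^4 + 624*x^5)
    = x^6 * ((GG x + (1-x)*(1+x)*qq x*e)/(54*(1+x))) := by
  unfold qq SS GG
  field_simp
  ring

end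

/-- The expansion of `H` begins `H(x) = x + 3x² + 16x³ + 96x⁴ + 624x⁵ + O(x⁶)`. -/
theorem stmt_5 :
    (fun x : ℝ => twoMapGF x - (x + 3 * x ^ 2 + 16 * x ^ 3 + 96 * x ^ 4 + 624 * x ^ 5))
      =O[nhdsWithin 0 {(0 : ℝ)}ᶜ] fun x : ℝ => x ^ 6 := by
  have hev : ∀ᶠ x in nhdsWithin 0 {(0:ℝ)}ᶜ,
      twoMapGF x - (x + 3 * x ^ 2 + 16 * x ^ 3 + 96 * x ^ 4 + 624 * x ^ 5) = x^6 * FF x := by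
    have h1 : ∀ᶠ x in nhds (0:ℝ), |x - 0| < 1/100 := eventually_abs_sub_lt 0 (by norm_num)
    filter_upwards [eventually_nhdsWithin_of_eventually_nhds h1, self_mem_nhdsWithin]
      with x hx hx0
    simp only [Set.mem_compl_iff, Set.mem_singleton_iff] at hx0
    rw [sub_zero, abs_lt] at hx
    obtain ⟨ha, hb⟩ := hx
    have h1x : (0:ℝ) < 1 + x := by linarith
    have hq : 0 < qq x := by unfold qq; nlinarith
    have hs0 : 0 ≤ ss x := Real.sqrt_nonneg _
    have hs2 : ss x ^ 2 = qq x := Real.sq_sqrt hq.le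
    have hS : 0 < SS x := by unfold SS; nlinarith [sq_nonneg x, sq_nonneg (x^2), sq_nonneg (x^3)]
    have hsS : 0 < ss x + SS x := by linarith
    have ht : ss x = SS x + x^8 * (DD x/(ss x + SS x)) := by
      have h2 := hs2
      unfold qq at h2
      field_simp
      unfold SS DD
      linear_combination h2
    have hrpow : (1 - 12*(x/(1+x)^2)) ^ ((3:ℝ)/2) = qq x * ss x/(1+x)^3 := by
      have hz2 : 1 - 12*(x/(1+x)^2) = (ss x/(1+x))^2 := by
        rw [div_pow, hs2]
        unfold qq
        field_simp
        ring
      rw [hz2, ← Real.rpow_natCast (ss x/(1+x)) 2, ← Real.rpow_mul (by positivity),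
        show ((2:ℕ):ℝ)*(3/2) = ((3:ℕ):ℝ) by norm_num, Real.rpow_natCast, div_pow, show ss x ^ 3 = qq x * ss x from by linear_combination ss x * hs2]
    unfold twoMapGF mapGF
    rw [hrpow, ht]
    unfold FF
    exact alg x (DD x/(ss x + SS x)) hx0 h1x.ne'
  have hs : ContinuousAt ss 0 := by
    apply Real.continuous_sqrt.continuousAt.comp
    unfold qq; fun_prop
  have hdenom : ss 0 + SS 0 ≠ 0 := by
    norm_num [ss, SS, qq]
  have hFcont : ContinuousAt FF 0 := by
    unfold FF
    apply ContinuousAt.div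
    · apply ContinuousAt.add (by unfold GG; fun_prop)
      apply ContinuousAt.mul (by unfold qq; fun_prop)
      exact ContinuousAt.div (by unfold DD; fun_prop) (hs.add (by unfold SS; fun_prop)) hdenom
    · fun_prop
    · norm_num
  have hO1 : FF =O[nhdsWithin 0 {(0:ℝ)}ᶜ] (fun _ => (1:ℝ)) :=
    (hFcont.tendsto.isBigO_one ℝ).mono nhdsWithin_le_nhds
  have hO : (fun x : ℝ => x^6 * FF x) =O[nhdsWithin 0 {(0:ℝ)}ᶜ] fun x : ℝ => x^6 := by
    simpa using (isBigO_refl (fun x : ℝ => x^6) (nhdsWithin 0 {(0:ℝ)}ᶜ)).mul hO1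
  exact Filter.EventuallyEq.trans_isBigO hev hO
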